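/- Under the bijection between secondary structures with at least one link and weighted rooted plane trees (weights on corners giving segment free-element counts and weights on edges giving stem lengths), the sequence length satisfies n = 2|E| + 2W_e + W_c, where |E| is the number of tree edges, W_e is the total edge weight, and W_c is the total corner weight. -/

import Mathlib

/-- Symbols of the dot-bracket representation of a secondary structure. -/
inductive RSym where
  | dot | op | cl
deriving DecidableEq

/-- Weighted rooted plane trees: `node w cs ks` has weight `w` on the edge to
its parent (ignored at the root), children `cs`, and the list `ks` of corner
weights (one for each of its `|cs| + 1` corners, in planar order).  The edge
weight `w` records the stem length (a stem of edge-weight `w` consists of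
`w + 1` links) and corner weights record numbers of free elements of the
corresponding segments. -/
inductive WTree where
  | node : ℕ → List WTree → List ℕ → WTree

namespace WTree

def edgeW : WTree → ℕ
  | .node w _ _ => w

/-- Number of edges `|E|`. -/
def numEdges : WTree → ℕ
  | .node _ cs _ => cs.length + (cs.attach.map (fun c => numEdges c.1)).sum
decreasing_by
  have := List.sizeOf_lt_of_mem c.2
  simp only [WTree.node.sizeOf_spec]; omega

/-- Total weight `W_e` over all edges. -/
def edgeWSum : WTree → ℕ
  | .node _ cs _ => (cs.attach.map (fun c => c.1.edgeW + edgeWSum c.1)).sum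
decreasing_by
  have := List.sizeOf_lt_of_mem c.2
  simp only [WTree.node.sizeOf_spec]; omega

/-- Total weight `W_c` over all corners. -/
def cornerWSum : WTree → ℕ
  | .node _ cs ks => ks.sum + (cs.attach.map (fun c => cornerWSum c.1)).sum
decreasing_by
  have := List.sizeOf_lt_of_mem c.2
  simp only [WTree.node.sizeOf_spec]; omega

mutual
/-- The dot-bracket word of the secondary structure corresponding to a
weighted rooted plane tree (via the stem/segment-reduction duality): a stem of
edge weight `w` contributes `w + 1` opening and `w + 1` closing parentheses,
and a corner of weight `k` contributes `k` dots (free elements). -/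
def word : WTree → List RSym
  | .node _ cs ks => List.replicate ks.headI RSym.dot ++ wordL cs ks.tail

def wordL : List WTree → List ℕ → List RSym
  | [], _ => []
  | c :: cs, ks =>
      List.replicate (c.edgeW + 1) RSym.op ++ word c
        ++ List.replicate (c.edgeW + 1) RSym.cl
        ++ List.replicate ks.headI RSym.dot ++ wordL cs ks.tail
end

end WTree

/-- Well-formedness: every node has exactly (arity + 1) corner weights. -/
inductive WellFormed : WTree → Prop
  | node (w : ℕ) (cs : List WTree) (ks : List ℕ) :
      ks.length = cs.length + 1 →
      (∀ c ∈ cs, WellFormed c) →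
      WellFormed (.node w cs ks)

namespace WTree

-- `headI` reads a missing corner weight as `0`, so only the first `cs.length` weights count.
theorem length_wordL (cs : List WTree) (ks : List ℕ) :
    (wordL cs ks).length =
      (cs.map fun c => 2 * (c.edgeW + 1) + c.word.length).sum + (ks.take cs.length).sum := by
  induction cs generalizing ks with
  | nil => simp [wordL]
  | cons c cs ih =>
    cases ks <;>
      simp only [wordL, List.length_append, List.length_replicate, List.length_cons, ih,
        List.headI_nil, List.headI_cons, Nat.default_eq_zero, List.tail_nil, List.tail_cons,
        List.take_nil, List.take_succ_cons, List.map_cons, List.sum_cons, List.sum_nil] <;>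
      omega

theorem length_word_node {w : ℕ} {cs : List WTree} {ks : List ℕ}
    (hks : ks.length = cs.length + 1) :
    (node w cs ks).word.length =
      (cs.map fun c => 2 * (c.edgeW + 1) + c.word.length).sum + ks.sum := by
  obtain ⟨k, ks, rfl⟩ := List.exists_cons_of_length_eq_add_one hks
  rw [word, List.length_append, length_wordL, List.length_replicate, List.headI_cons,
    List.tail_cons, List.take_of_length_le (by simp_all), List.sum_cons]
  omega

end WTree

/-- Under the duality between secondary structures and weighted rooted plane
trees, the length `n` of the underlying sequence equals
`2|E| + 2 W_e + W_c`. -/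
theorem length_eq_two_numEdges_add_two_edgeWSum_add_cornerWSum
    (T : WTree) (hT : WellFormed T) :
    (T.word).length = 2 * T.numEdges + 2 * T.edgeWSum + T.cornerWSum := by
  induction hT with
  | node _ cs ks hks _ ih =>
    rw [WTree.length_word_node hks,
      List.map_congr_left fun c hc => congrArg (2 * (c.edgeW + 1) + ·) (ih c hc)]
    simp only [WTree.numEdges, WTree.edgeWSum, WTree.cornerWSum, List.attach_map_val,
      mul_add, mul_one, List.sum_map_add, List.sum_map_mul_left, List.map_const',
      List.sum_replicate, smul_eq_mul]
    ring
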